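/- Let R be a Markov probability measure on path space and P ≪ R. Suppose that for some fixed t ∈ [0,1] the Radon–Nikodym derivative factorizes as dP/dR = α_t · β_t R-a.s., where α_t ≥ 0 is 𝒜_{[0,t]}-measurable and β_t ≥ 0 is 𝒜_{[t,1]}-measurable. Then for all events A ∈ 𝒜_{[0,t]} and B ∈ 𝒜_{[t,1]}, P(A ∩ B | X_t) = P(A | X_t) P(B | X_t) P-a.s.; i.e., P satisfies the Markov splitting at time t. -/

import Mathlib

open MeasureTheory

noncomputable section

variable {Ω 𝒳 : Type*}

/-- σ-algebra generated by the canonical process on the time window `[s,u]`. -/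
def window [MeasurableSpace 𝒳] (X : ℝ → Ω → 𝒳) (s u : ℝ) : MeasurableSpace Ω :=
  ⨆ r ∈ Set.Icc s u, MeasurableSpace.comap (X r) inferInstance

/-- σ-algebra generated by the position at time `t`. -/
def at1 [MeasurableSpace 𝒳] (X : ℝ → Ω → 𝒳) (t : ℝ) : MeasurableSpace Ω :=
  MeasurableSpace.comap (X t) inferInstance

/-- σ-algebra generated by the pair of positions at times `s` and `u`. -/
def at2 [MeasurableSpace 𝒳] (X : ℝ → Ω → 𝒳) (s u : ℝ) : MeasurableSpace Ω :=
  MeasurableSpace.comap (fun ω => (X s ω, X u ω)) inferInstance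

/-- Indicator function of an event, real-valued. -/
def ind (A : Set Ω) : Ω → ℝ := A.indicator (fun _ => 1)

/-- The two-sided (symmetric) Markov property: for every time `t ∈ [0,1]`, past and future
events are conditionally independent given the present position `X t`. -/
def IsMarkov [MeasurableSpace Ω] [MeasurableSpace 𝒳]
    (X : ℝ → Ω → 𝒳) (P : Measure Ω) : Prop :=
  ∀ t ∈ Set.Icc (0:ℝ) 1, ∀ A B : Set Ω,
    MeasurableSet[window X 0 t] A → MeasurableSet[window X t 1] B →
    P[ind (A ∩ B) | at1 X t] =ᵐ[P] P[ind A | at1 X t] * P[ind B | at1 X t]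

/-- The reciprocal property: for all `0 ≤ s ≤ u ≤ 1`, the events inside `[s,u]` and those
outside are conditionally independent given the pair `(X s, X u)`. -/
def IsReciprocal [MeasurableSpace Ω] [MeasurableSpace 𝒳]
    (X : ℝ → Ω → 𝒳) (P : Measure Ω) : Prop :=
  ∀ s u : ℝ, 0 ≤ s → s ≤ u → u ≤ 1 → ∀ A B C : Set Ω,
    MeasurableSet[window X 0 s] A → MeasurableSet[window X s u] B →
    MeasurableSet[window X u 1] C →
    P[ind (A ∩ B ∩ C) | at2 X s u] =ᵐ[P]
      P[ind (A ∩ C) | at2 X s u] * P[ind B | at2 X s u]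

/-! With `ρ = α β`, the abstract Bayes formula gives `P[1_C | X_t] = R[ρ 1_C | X_t] / R[ρ | X_t]`.
Under `R` the splitting at `t` extends from events to nonnegative past and future functions, so
conditioning `(1_A α)(1_B β)`, `α β`, `(1_A α) β` and `α (1_B β)` on `X_t` factorizes, and comparing
the four factorizations gives `R[ρ 1_{A∩B} | X_t] R[ρ | X_t] = R[ρ 1_A | X_t] R[ρ 1_B | X_t]`: this
is the splitting of `P` once divided by `R[ρ | X_t]²`. As `α` and `β` need not be integrable on
their own, the factorizations are proved for truncations and passed to the limit by conditional
monotone convergence. -/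

open Filter Topology

lemma ind_nonneg (A : Set Ω) (ω : Ω) : 0 ≤ ind A ω :=
  Set.indicator_nonneg (fun _ _ => zero_le_one) ω

lemma ind_le_one (A : Set Ω) (ω : Ω) : ind A ω ≤ 1 :=
  Set.indicator_le_self' (fun _ _ => zero_le_one) ω

lemma norm_ind_le_one (A : Set Ω) (ω : Ω) : ‖ind A ω‖ ≤ 1 := by
  rw [Real.norm_of_nonneg (ind_nonneg A ω)]
  exact ind_le_one A ω

lemma ind_inter (A B : Set Ω) : ind (A ∩ B) = ind A * ind B :=
  Set.inter_indicator_one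

lemma stronglyMeasurable_ind {m : MeasurableSpace Ω} {A : Set Ω} (hA : MeasurableSet[m] A) :
    StronglyMeasurable[m] (ind A) :=
  stronglyMeasurable_const.indicator hA

lemma integrable_ind {m0 : MeasurableSpace Ω} {μ : Measure Ω} [IsFiniteMeasure μ] {A : Set Ω}
    (hA : MeasurableSet A) : Integrable (ind A) μ :=
  (integrable_const (1 : ℝ)).indicator hA

lemma integral_ind_mul {m0 : MeasurableSpace Ω} {μ : Measure Ω} {S : Set Ω}
    (hS : MeasurableSet S) (g : Ω → ℝ) :
    ∫ ω, ind S ω * g ω ∂μ = ∫ ω in S, g ω ∂μ := by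
  rw [← integral_indicator hS]
  congr 1
  funext ω
  by_cases h : ω ∈ S <;> simp [ind, h]

lemma ind_mul_mem_Icc (A : Set Ω) {u : Ω → ℝ} {ω : Ω} (hu : 0 ≤ u ω) :
    (ind A * u) ω ∈ Set.Icc 0 (u ω) :=
  ⟨mul_nonneg (ind_nonneg A ω) hu, mul_le_of_le_one_left hu (ind_le_one A ω)⟩

lemma div_eq_div_mul_div_of_mul_eq {r h p q : ℝ} (H : r * h = p * q) :
    r / h = p / h * (q / h) := by
  rcases eq_or_ne h 0 with rfl | hh
  · simp
  · rw [div_mul_div_comm, ← H, mul_div_mul_right _ _ hh]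

section CondExp

variable {m m0 : MeasurableSpace Ω} {μ : Measure Ω}

lemma integral_mul_eq_integral_condExp_mul (hm : m ≤ m0) [SigmaFinite (μ.trim hm)]
    {f g : Ω → ℝ} (hf : Integrable f μ) (hg : StronglyMeasurable[m] g)
    (hfg : Integrable (fun ω => f ω * g ω) μ) :
    ∫ ω, f ω * g ω ∂μ = ∫ ω, μ[f | m] ω * g ω ∂μ :=
  calc ∫ ω, f ω * g ω ∂μ = ∫ ω, μ[f * g | m] ω ∂μ := (integral_condExp hm).symm
    _ = ∫ ω, μ[f | m] ω * g ω ∂μ :=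
      integral_congr_ae (condExp_mul_of_stronglyMeasurable_right hg hfg hf)

lemma MeasureTheory.Integrable.mul_of_mem_Icc {f g u v : Ω → ℝ} (hfg : Integrable (f * g) μ)
    (hu : AEStronglyMeasurable u μ) (hv : AEStronglyMeasurable v μ)
    (hfu : ∀ ω, u ω ∈ Set.Icc 0 (f ω)) (hgv : ∀ ω, v ω ∈ Set.Icc 0 (g ω)) :
    Integrable (u * v) μ :=
  hfg.mono (hu.mul hv) <| .of_forall fun ω => by
    have hf0 : 0 ≤ f ω := (hfu ω).1.trans (hfu ω).2
    simp only [Pi.mul_apply, norm_mul, Real.norm_of_nonneg, (hfu ω).1, (hgv ω).1, hf0,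
      (hgv ω).1.trans (hgv ω).2]
    exact mul_le_mul (hfu ω).2 (hgv ω).2 (hgv ω).1 hf0

lemma ae_norm_condExp_ind_le_one (A : Set Ω) : ∀ᵐ ω ∂μ, ‖μ[ind A | m] ω‖ ≤ 1 :=
  ae_bdd_norm_condExp_of_ae_bdd_norm (Eventually.of_forall (norm_ind_le_one A))

lemma ae_tendsto_condExp_of_monotone (hm : m ≤ m0) [SigmaFinite (μ.trim hm)]
    {f : ℕ → Ω → ℝ} {g : Ω → ℝ} (hf : ∀ n, Integrable (f n) μ)
    (hg : Integrable g μ) (hmono : ∀ ω, Monotone (f · ω))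
    (hlim : ∀ ω, Tendsto (f · ω) atTop (𝓝 (g ω))) :
    ∀ᵐ ω ∂μ, Tendsto (fun n => μ[f n | m] ω) atTop (𝓝 (μ[g | m] ω)) := by
  have hle : ∀ n, f n ≤ᵐ[μ] g := fun n =>
    .of_forall fun ω => (hmono ω).ge_of_tendsto (hlim ω) n
  refine tendsto_of_integral_tendsto_of_monotone (fun _ => integrable_condExp) integrable_condExp
    ?_ ?_ (ae_all_iff.2 fun n => condExp_mono (hf n) hg (hle n))
  · simp only [integral_condExp hm]
    exact integral_tendsto_of_tendsto_of_monotone hf hg (.of_forall hmono) (.of_forall hlim)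
  · filter_upwards [ae_all_iff.2 fun n => condExp_mono (m := m) (hf n) (hf (n + 1))
      (.of_forall fun ω => hmono ω n.le_succ)] with ω hω
    exact monotone_nat_of_le_succ hω

end CondExp

def truncAt (u : Ω → ℝ) (n : ℕ) : Ω → ℝ := fun ω => min (u ω) n

section TruncAt

variable {u : Ω → ℝ}

lemma truncAt_nonneg (hu : ∀ ω, 0 ≤ u ω) (n : ℕ) (ω : Ω) : 0 ≤ truncAt u n ω :=
  le_min (hu ω) n.cast_nonneg

lemma truncAt_mem_Icc (hu : ∀ ω, 0 ≤ u ω) (n : ℕ) (ω : Ω) : truncAt u n ω ∈ Set.Icc 0 (u ω) :=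
  ⟨truncAt_nonneg hu n ω, min_le_left _ _⟩

lemma norm_truncAt_le (hu : ∀ ω, 0 ≤ u ω) (n : ℕ) (ω : Ω) : ‖truncAt u n ω‖ ≤ n := by
  rw [Real.norm_of_nonneg (truncAt_nonneg hu n ω)]
  exact min_le_right _ _

lemma monotone_truncAt (u : Ω → ℝ) (ω : Ω) : Monotone (truncAt u · ω) := fun _ _ hnk =>
  min_le_min_left _ (Nat.cast_le.2 hnk)

lemma tendsto_truncAt (u : Ω → ℝ) (ω : Ω) :
    Tendsto (truncAt u · ω) atTop (𝓝 (u ω)) :=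
  tendsto_const_nhds.congr' <| (tendsto_natCast_atTop_atTop.eventually_ge_atTop (u ω)).mono
    fun _ hn => (min_eq_left hn).symm

lemma Measurable.truncAt {m : MeasurableSpace Ω} (hu : Measurable[m] u) (n : ℕ) :
    Measurable[m] (truncAt u n) :=
  hu.min measurable_const

end TruncAt

section Bayes

variable {m m0 : MeasurableSpace Ω} {R : Measure Ω} {ρ : Ω → ℝ}

lemma integrable_of_isFiniteMeasure_withDensity_ofReal (hρ0 : ∀ ω, 0 ≤ ρ ω)
    (hρm : AEStronglyMeasurable ρ R)
    [IsFiniteMeasure (R.withDensity fun ω => ENNReal.ofReal (ρ ω))] : Integrable ρ R := by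
  refine ⟨hρm, (hasFiniteIntegral_iff_ofReal (.of_forall hρ0)).2 ?_⟩
  rw [← setLIntegral_univ, ← withDensity_apply _ .univ]
  exact measure_lt_top _ _

lemma setIntegral_withDensity_ofReal [SFinite R] (hρ0 : ∀ ω, 0 ≤ ρ ω) (hρm : Measurable ρ)
    (φ : Ω → ℝ) (S : Set Ω) :
    ∫ ω in S, φ ω ∂ R.withDensity (fun ω => ENNReal.ofReal (ρ ω)) = ∫ ω in S, ρ ω * φ ω ∂ R := by
  rw [setIntegral_withDensity_eq_setIntegral_toReal_smul' S hρm.ennreal_ofReal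
    (.of_forall fun _ => ENNReal.ofReal_lt_top)]
  simp only [ENNReal.toReal_ofReal (hρ0 _), smul_eq_mul]

lemma ae_norm_condExp_mul_le [IsFiniteMeasure R] (hρ0 : ∀ ω, 0 ≤ ρ ω) (hρ : Integrable ρ R)
    {f : Ω → ℝ} (hf : AEStronglyMeasurable f R) {C : ℝ} (hfC : ∀ ω, ‖f ω‖ ≤ C) :
    ∀ᵐ ω ∂ R, ‖R[ρ * f | m] ω‖ ≤ C * R[ρ | m] ω := by
  have hbound : (fun ω => ‖(ρ * f) ω‖) ≤ᵐ[R] C • ρ := .of_forall fun ω => by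
    simpa [norm_mul, Real.norm_of_nonneg (hρ0 ω), mul_comm] using
      mul_le_mul_of_nonneg_right (hfC ω) (hρ0 ω)
  filter_upwards [norm_condExp_le (m := m) (ρ * f),
    condExp_mono (m := m) (hρ.mul_bdd hf (.of_forall hfC)).norm (hρ.smul C) hbound,
    condExp_smul (m := m) C ρ] with ω h₁ h₂ h₃
  simpa [h₃] using h₁.trans h₂

/-- Abstract Bayes formula; the quotient is `0` where `R[ρ | m]` vanishes, a `P`-null set. -/
lemma condExp_withDensity_ae_eq_div [IsFiniteMeasure R] (hm : m ≤ m0) (hρ0 : ∀ ω, 0 ≤ ρ ω)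
    (hρm : Measurable ρ) (hρ : Integrable ρ R) {f : Ω → ℝ} (hfm : Measurable f) {C : ℝ}
    (hfC : ∀ ω, ‖f ω‖ ≤ C) :
    (R.withDensity fun ω => ENNReal.ofReal (ρ ω))[f | m]
      =ᵐ[R.withDensity fun ω => ENNReal.ofReal (ρ ω)] R[ρ * f | m] / R[ρ | m] := by
  set P := R.withDensity fun ω => ENNReal.ofReal (ρ ω)
  have : IsFiniteMeasure P := isFiniteMeasure_withDensity_ofReal hρ.2
  set g := R[ρ * f | m] / R[ρ | m]
  have hgm : StronglyMeasurable[m] g := stronglyMeasurable_condExp.div stronglyMeasurable_condExp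
  have hfacts : ∀ᵐ ω ∂ R, ‖g ω‖ ≤ C ∧ R[ρ | m] ω * g ω = R[ρ * f | m] ω := by
    filter_upwards [ae_norm_condExp_mul_le (m := m) hρ0 hρ hfm.aestronglyMeasurable hfC,
      condExp_nonneg (m := m) (.of_forall hρ0)] with ω hk hh
    replace hh : 0 ≤ R[ρ | m] ω := hh
    have hC : 0 ≤ C := (norm_nonneg _).trans (hfC ω)
    simp only [g, Pi.div_apply, norm_div, Real.norm_of_nonneg hh]
    rcases hh.eq_or_lt with h0 | hpos
    · rw [← h0, mul_zero, norm_le_zero_iff] at hk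
      simp [← h0, hk, hC]
    · exact ⟨(div_le_iff₀ hpos).2 hk, mul_div_cancel₀ _ hpos.ne'⟩
  have hgR : ∀ᵐ ω ∂ R, ‖g ω‖ ≤ C := hfacts.mono fun _ h => h.1
  refine (ae_eq_condExp_of_forall_setIntegral_eq hm
    (.of_bound hfm.aestronglyMeasurable C (.of_forall hfC))
    (fun S _ _ => (Integrable.of_bound (hgm.mono hm).aestronglyMeasurable C
      ((withDensity_absolutelyContinuous R _).ae_le hgR)).integrableOn)
    (fun S hS _ => ?_) (hgm.mono le_rfl).aestronglyMeasurable).symm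
  have hρg : Integrable (ρ * g) R := hρ.mul_bdd (hgm.mono hm).aestronglyMeasurable hgR
  calc ∫ ω in S, g ω ∂P = ∫ ω in S, (ρ * g) ω ∂ R := setIntegral_withDensity_ofReal hρ0 hρm g S
    _ = ∫ ω in S, R[ρ * g | m] ω ∂ R := (setIntegral_condExp hm hρg hS).symm
    _ = ∫ ω in S, R[ρ * f | m] ω ∂ R := by
      refine setIntegral_congr_ae (hm _ hS) ?_
      filter_upwards [condExp_mul_of_stronglyMeasurable_right hgm hρg hρ, hfacts] with ω h₁ h₂ _
      rw [h₁, Pi.mul_apply, h₂.2]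
    _ = ∫ ω in S, (ρ * f) ω ∂ R :=
      setIntegral_condExp hm (hρ.mul_bdd hfm.aestronglyMeasurable (.of_forall hfC)) hS
    _ = ∫ ω in S, f ω ∂P := (setIntegral_withDensity_ofReal hρ0 hρm f S).symm

end Bayes

/-- Conditional independence of `mF` and `mG` given `m`, in the indicator form of `IsMarkov`. -/
def MarkovSplitting (m mF mG : MeasurableSpace Ω) {m0 : MeasurableSpace Ω} (μ : Measure Ω) :
    Prop :=
  ∀ A B : Set Ω, MeasurableSet[mF] A → MeasurableSet[mG] B →
    μ[ind (A ∩ B) | m] =ᵐ[μ] μ[ind A | m] * μ[ind B | m]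

namespace MarkovSplitting

variable {m mF mG m0 : MeasurableSpace Ω} {μ : Measure Ω} [IsFiniteMeasure μ]

lemma condExp_ind_eq (h : MarkovSplitting m mF mG μ) (hmF : m ≤ mF) (hF : mF ≤ m0)
    (hG : mG ≤ m0) {B : Set Ω} (hB : MeasurableSet[mG] B) :
    μ[ind B | mF] =ᵐ[μ] μ[ind B | m] := by
  have hm : m ≤ m0 := hmF.trans hF
  refine (ae_eq_condExp_of_forall_setIntegral_eq hF (integrable_ind (hG _ hB))
    (fun s _ _ => integrable_condExp.integrableOn) (fun A hA _ => ?_)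
    (stronglyMeasurable_condExp.mono hmF).aestronglyMeasurable).symm
  have hA' : MeasurableSet A := hF _ hA
  calc ∫ ω in A, μ[ind B | m] ω ∂μ
      = ∫ ω, ind A ω * μ[ind B | m] ω ∂μ := (integral_ind_mul hA' _).symm
    _ = ∫ ω, (μ[ind A | m] * μ[ind B | m]) ω ∂μ :=
      integral_mul_eq_integral_condExp_mul hm (integrable_ind hA') stronglyMeasurable_condExp
        ((integrable_ind hA').mul_bdd (stronglyMeasurable_condExp.mono hm).aestronglyMeasurable
          (ae_norm_condExp_ind_le_one B))
    _ = ∫ ω, μ[ind (A ∩ B) | m] ω ∂μ := integral_congr_ae (h A B hA hB).symm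
    _ = ∫ ω, ind A ω * ind B ω ∂μ := by rw [integral_condExp hm, ind_inter]; rfl
    _ = ∫ ω in A, ind B ω ∂μ := integral_ind_mul hA' _

lemma condExp_eq (h : MarkovSplitting m mF mG μ) (hmF : m ≤ mF) (hmG : m ≤ mG) (hF : mF ≤ m0)
    (hG : mG ≤ m0) {f : Ω → ℝ} (hfm : StronglyMeasurable[mF] f) (hf : Integrable f μ) :
    μ[f | mG] =ᵐ[μ] μ[f | m] := by
  have hm : m ≤ m0 := hmF.trans hF
  refine (ae_eq_condExp_of_forall_setIntegral_eq hG hf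
    (fun s _ _ => integrable_condExp.integrableOn) (fun B hB _ => ?_)
    (stronglyMeasurable_condExp.mono hmG).aestronglyMeasurable).symm
  have hB' : MeasurableSet B := hG _ hB
  have hind : AEStronglyMeasurable (ind B) μ := (stronglyMeasurable_ind hB').aestronglyMeasurable
  calc ∫ ω in B, μ[f | m] ω ∂μ
      = ∫ ω, ind B ω * μ[f | m] ω ∂μ := (integral_ind_mul hB' _).symm
    _ = ∫ ω, μ[ind B | m] ω * μ[f | m] ω ∂μ :=
      integral_mul_eq_integral_condExp_mul hm (integrable_ind hB') stronglyMeasurable_condExp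
        (integrable_condExp.bdd_mul hind (.of_forall (norm_ind_le_one B)))
    _ = ∫ ω, f ω * μ[ind B | m] ω ∂μ := by
      simp only [mul_comm (μ[ind B | m] _)]
      exact (integral_mul_eq_integral_condExp_mul hm hf stronglyMeasurable_condExp
        (hf.mul_bdd (stronglyMeasurable_condExp.mono hm).aestronglyMeasurable
          (ae_norm_condExp_ind_le_one B))).symm
    _ = ∫ ω, f ω * μ[ind B | mF] ω ∂μ :=
      integral_congr_ae ((h.condExp_ind_eq hmF hF hG hB).mono fun ω hω => by simp only [hω])
    _ = ∫ ω, ind B ω * f ω ∂μ := by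
      simp only [mul_comm (f _)]
      exact (integral_mul_eq_integral_condExp_mul hF (integrable_ind hB') hfm
        (hf.bdd_mul hind (.of_forall (norm_ind_le_one B)))).symm
    _ = ∫ ω in B, f ω ∂μ := integral_ind_mul hB' _

lemma condExp_mul (h : MarkovSplitting m mF mG μ) (hmF : m ≤ mF) (hmG : m ≤ mG) (hF : mF ≤ m0)
    (hG : mG ≤ m0) {f g : Ω → ℝ} {C : ℝ} (hfm : StronglyMeasurable[mF] f) (hf : Integrable f μ)
    (hgm : StronglyMeasurable[mG] g) (hgC : ∀ ω, ‖g ω‖ ≤ C) :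
    μ[f * g | m] =ᵐ[μ] μ[f | m] * μ[g | m] := by
  have hg : Integrable g μ := .of_bound (hgm.mono hG).aestronglyMeasurable C (.of_forall hgC)
  have hfg : Integrable (f * g) μ :=
    hf.mul_bdd (hgm.mono hG).aestronglyMeasurable (.of_forall hgC)
  have hcfg : Integrable (μ[f | m] * g) μ :=
    integrable_condExp.mul_bdd (hgm.mono hG).aestronglyMeasurable (.of_forall hgC)
  calc μ[f * g | m]
      =ᵐ[μ] μ[μ[f * g | mG] | m] := (condExp_condExp_of_le hmG hG).symm
    _ =ᵐ[μ] μ[μ[f | m] * g | m] := by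
      refine condExp_congr_ae ?_
      filter_upwards [condExp_mul_of_stronglyMeasurable_right hgm hfg hf,
        h.condExp_eq hmF hmG hF hG hfm hf] with ω h₁ h₂
      simp only [h₁, Pi.mul_apply, h₂]
    _ =ᵐ[μ] μ[f | m] * μ[g | m] :=
      condExp_mul_of_stronglyMeasurable_left stronglyMeasurable_condExp hcfg hg

lemma ae_tendsto_condExp_truncAt_mul (h : MarkovSplitting m mF mG μ) (hmF : m ≤ mF)
    (hmG : m ≤ mG) (hF : mF ≤ m0) (hG : mG ≤ m0) {u v : Ω → ℝ} (hu0 : ∀ ω, 0 ≤ u ω)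
    (hv0 : ∀ ω, 0 ≤ v ω) (hu : Measurable[mF] u) (hv : Measurable[mG] v)
    (huv : Integrable (u * v) μ) :
    ∀ᵐ ω ∂μ, Tendsto (fun n => μ[truncAt u n | m] ω * μ[truncAt v n | m] ω) atTop
      (𝓝 (μ[u * v | m] ω)) := by
  have hm : m ≤ m0 := hmF.trans hF
  have hmono : ∀ ω, Monotone fun n => (truncAt u n * truncAt v n) ω :=
    fun ω _ _ hnk => mul_le_mul (monotone_truncAt u ω hnk) (monotone_truncAt v ω hnk)
      (truncAt_nonneg hv0 _ ω) (truncAt_nonneg hu0 _ ω)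
  have hint : ∀ n, Integrable (truncAt u n * truncAt v n) μ := fun n =>
    huv.mul_of_mem_Icc ((hu.truncAt n).mono hF le_rfl).aestronglyMeasurable
      ((hv.truncAt n).mono hG le_rfl).aestronglyMeasurable (truncAt_mem_Icc hu0 n)
      (truncAt_mem_Icc hv0 n)
  have hlim := ae_tendsto_condExp_of_monotone hm hint huv hmono
    (fun ω => (tendsto_truncAt u ω).mul (tendsto_truncAt v ω))
  have hsplit : ∀ n, μ[truncAt u n * truncAt v n | m] =ᵐ[μ]
      μ[truncAt u n | m] * μ[truncAt v n | m] := fun n =>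
    h.condExp_mul hmF hmG hF hG (hu.truncAt n).stronglyMeasurable
      (.of_bound ((hu.truncAt n).mono hF le_rfl).aestronglyMeasurable n
        (.of_forall (norm_truncAt_le hu0 n)))
      (hv.truncAt n).stronglyMeasurable (norm_truncAt_le hv0 n)
  filter_upwards [hlim, ae_all_iff.2 hsplit] with ω hω hn
  exact hω.congr fun n => hn n

lemma condExp_mul_mul_condExp_mul (h : MarkovSplitting m mF mG μ) (hmF : m ≤ mF)
    (hmG : m ≤ mG) (hF : mF ≤ m0) (hG : mG ≤ m0) {f f' g g' : Ω → ℝ}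
    (hf' : ∀ ω, f' ω ∈ Set.Icc 0 (f ω)) (hg' : ∀ ω, g' ω ∈ Set.Icc 0 (g ω))
    (hfm : Measurable[mF] f) (hf'm : Measurable[mF] f') (hgm : Measurable[mG] g)
    (hg'm : Measurable[mG] g') (hfg : Integrable (f * g) μ) :
    μ[f' * g' | m] * μ[f * g | m] =ᵐ[μ] μ[f' * g | m] * μ[f * g' | m] := by
  have hf : ∀ ω, f ω ∈ Set.Icc 0 (f ω) := fun ω => ⟨(hf' ω).1.trans (hf' ω).2, le_rfl⟩
  have hg : ∀ ω, g ω ∈ Set.Icc 0 (g ω) := fun ω => ⟨(hg' ω).1.trans (hg' ω).2, le_rfl⟩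
  have lim := fun {u v : Ω → ℝ} (hu : Measurable[mF] u) (hv : Measurable[mG] v)
      (hfu : ∀ ω, u ω ∈ Set.Icc 0 (f ω)) (hgv : ∀ ω, v ω ∈ Set.Icc 0 (g ω)) =>
    h.ae_tendsto_condExp_truncAt_mul hmF hmG hF hG (fun ω => (hfu ω).1) (fun ω => (hgv ω).1)
      hu hv (hfg.mul_of_mem_Icc (hu.mono hF le_rfl).aestronglyMeasurable
        (hv.mono hG le_rfl).aestronglyMeasurable hfu hgv)
  filter_upwards [lim hf'm hg'm hf' hg', lim hfm hgm hf hg, lim hf'm hgm hf' hg,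
    lim hfm hg'm hf hg'] with ω h₁ h₂ h₃ h₄
  exact tendsto_nhds_unique (h₁.mul h₂) ((h₃.mul h₄).congr fun n => by ring)

end MarkovSplitting

lemma window_le [MeasurableSpace Ω] [MeasurableSpace 𝒳] {X : ℝ → Ω → 𝒳}
    (hX : ∀ t, Measurable (X t)) (s u : ℝ) : window X s u ≤ ‹MeasurableSpace Ω› :=
  iSup₂_le fun r _ => (hX r).comap_le

lemma at1_le_window {m : MeasurableSpace 𝒳} {X : ℝ → Ω → 𝒳} {s t u : ℝ} (ht : t ∈ Set.Icc s u) :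
    at1 X t ≤ window X s u :=
  le_iSup₂ (f := fun r (_ : r ∈ Set.Icc s u) => MeasurableSpace.comap (X r) m) t ht

/-- if `dP/dR = α_t β_t` with `α_t` past-measurable and `β_t` future-measurable,
then `P` satisfies the Markov splitting at time `t`. -/
theorem factorized_density_implies_markov_splitting
    [MeasurableSpace Ω] [MeasurableSpace 𝒳]
    (X : ℝ → Ω → 𝒳) (hX : ∀ t, Measurable (X t))
    (R P : Measure Ω) [IsProbabilityMeasure R] [IsProbabilityMeasure P]
    (hR : IsMarkov X R)
    (t : ℝ) (ht : t ∈ Set.Icc (0:ℝ) 1)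
    (α β : Ω → ℝ) (hα0 : ∀ ω, 0 ≤ α ω) (hβ0 : ∀ ω, 0 ≤ β ω)
    (hα : Measurable[window X 0 t] α) (hβ : Measurable[window X t 1] β)
    (hP : P = R.withDensity (fun ω => ENNReal.ofReal (α ω * β ω))) :
    ∀ A B : Set Ω,
      MeasurableSet[window X 0 t] A → MeasurableSet[window X t 1] B →
      P[ind (A ∩ B) | at1 X t] =ᵐ[P] P[ind A | at1 X t] * P[ind B | at1 X t] := by
  intro A B hA hB
  subst hP
  have hF := window_le hX 0 t
  have hG := window_le hX t 1
  have hmF : at1 X t ≤ window X 0 t := at1_le_window ⟨ht.1, le_rfl⟩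
  have hmG : at1 X t ≤ window X t 1 := at1_le_window ⟨le_rfl, ht.2⟩
  have hρ0 : ∀ ω, 0 ≤ (α * β) ω := fun ω => mul_nonneg (hα0 ω) (hβ0 ω)
  have hρm : Measurable (α * β) := (hα.mono hF le_rfl).mul (hβ.mono hG le_rfl)
  have hρ : Integrable (α * β) R :=
    integrable_of_isFiniteMeasure_withDensity_ofReal hρ0 hρm.aestronglyMeasurable
  have bayes : ∀ {C : Set Ω}, MeasurableSet C → _ := fun hC =>
    condExp_withDensity_ae_eq_div (hmF.trans hF) hρ0 hρm hρ
      (stronglyMeasurable_ind hC).measurable (norm_ind_le_one _)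
  have hcross := MarkovSplitting.condExp_mul_mul_condExp_mul (hR t ht) hmF hmG hF hG
    (fun ω => ind_mul_mem_Icc A (hα0 ω)) (fun ω => ind_mul_mem_Icc B (hβ0 ω)) hα
    ((stronglyMeasurable_ind hA).measurable.mul hα) hβ
    ((stronglyMeasurable_ind hB).measurable.mul hβ) hρ
  have e₁ : ind A * α * (ind B * β) = α * β * ind (A ∩ B) := by rw [ind_inter]; ring
  have e₂ : ind A * α * β = α * β * ind A := by ring
  have e₃ : α * (ind B * β) = α * β * ind B := by ring
  rw [e₁, e₂, e₃] at hcross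
  filter_upwards [bayes (hF _ hA |>.inter (hG _ hB)), bayes (hF _ hA), bayes (hG _ hB),
    (withDensity_absolutelyContinuous _ _).ae_le hcross] with ω h₁ h₂ h₃ h₄
  simp only [Pi.mul_apply, Pi.div_apply] at h₁ h₂ h₃ h₄ ⊢
  rw [h₁, h₂, h₃]
  exact div_eq_div_mul_div_of_mul_eq h₄
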